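/- arXiv:0907.3616 — 3 statements merged into one kernel-verified Lean document; each statement's English description precedes it below -/
import Mathlib

section
/- Let Z > 0 be a random variable with E(1/Z) < ∞ and density g, and let η > 0. Define Γ(π) = E[(log(l(π)/Z))⁺] where l(π) satisfies E[(l(π) − Z)⁺] = π. Then π^{−1/η}·Γ(π) → 0 as π → ∞; equivalently, d·Γ(P̄/d^η) → 0 as d → 0. -/
open Real MeasureTheory Filter

/-! Since `log (l / z) ≤ log⁺ l + 1 / z`, we have `Γ(π) ≤ log⁺ l(π) + E(1/Z)`. The water level
grows at most linearly: once `P(Z ≤ M) > 1/2`, `π = E[(l(π) - Z)⁺] ≥ (l(π) - M) / 2`, so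
`l(π) ≤ 3π` for `π ≥ M`. Hence `Γ(π) = O(log π)`, which is `o(π^(1/η))`. -/

theorem max_log_div_le {l z : ℝ} (hl : 0 < l) (hz : 0 < z) :
    max (log (l / z)) 0 ≤ max (log l) 0 + 1 / z := by
  have hlog_inv : log (1 / z) ≤ 1 / z :=
    (log_le_sub_one_of_pos (by positivity)).trans (sub_le_self _ zero_le_one)
  have hsplit : log (l / z) = log l + log (1 / z) := by
    rw [← log_mul hl.ne' (by positivity), mul_one_div]
  refine max_le ?_ (add_nonneg (le_max_right _ _) (by positivity))
  rw [hsplit]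
  exact add_le_add (le_max_left _ _) hlog_inv

section Integrals

variable {Ω : Type*} [MeasurableSpace Ω] {μ : Measure Ω} {Z : Ω → ℝ}

theorem integral_max_log_div_le [IsProbabilityMeasure μ] (hZpos : ∀ ω, 0 < Z ω)
    (hZint : Integrable (fun ω => 1 / Z ω) μ) {l : ℝ} (hl : 0 < l) :
    ∫ ω, max (log (l / Z ω)) 0 ∂μ ≤ max (log l) 0 + ∫ ω, 1 / Z ω ∂μ := by
  calc ∫ ω, max (log (l / Z ω)) 0 ∂μ ≤ ∫ ω, (max (log l) 0 + 1 / Z ω) ∂μ :=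
        integral_mono_of_nonneg (.of_forall fun _ => le_max_right _ _)
          ((integrable_const _).add hZint) (.of_forall fun ω => max_log_div_le hl (hZpos ω))
    _ = max (log l) 0 + ∫ ω, 1 / Z ω ∂μ := by
        rw [integral_add (integrable_const _) hZint, integral_const, probReal_univ, one_smul]

theorem eventually_lt_measureReal_setOf_le [IsFiniteMeasure μ] {r : ℝ} (hr : r < μ.real .univ) :
    ∀ᶠ M in atTop, r < μ.real {ω | Z ω ≤ M} := by
  have hmono : Monotone fun M : ℝ => {ω | Z ω ≤ M} :=
    fun _ _ hMN _ hω => le_trans hω hMN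
  have hunion : ⋃ M : ℝ, {ω | Z ω ≤ M} = .univ :=
    Set.eq_univ_of_forall fun ω => Set.mem_iUnion.2 ⟨Z ω, show Z ω ≤ Z ω from le_rfl⟩
  have hlim := (ENNReal.tendsto_toReal (measure_ne_top μ _)).comp
    (tendsto_measure_iUnion_atTop (μ := μ) hmono)
  rw [hunion] at hlim
  exact hlim.eventually (eventually_gt_nhds hr)

theorem measureReal_mul_max_sub_le_integral [IsFiniteMeasure μ] (hZmeas : Measurable Z)
    (hZnn : ∀ ω, 0 ≤ Z ω) (l M : ℝ) :
    μ.real {ω | Z ω ≤ M} * max (l - M) 0 ≤ ∫ ω, max (l - Z ω) 0 ∂μ := by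
  have hint : Integrable (fun ω => max (l - Z ω) 0) μ := by
    refine (integrable_const |l|).mono' ((measurable_const.sub hZmeas).max
      measurable_const).aestronglyMeasurable (.of_forall fun ω => ?_)
    rw [norm_of_nonneg (le_max_right _ _)]
    exact max_le (by linarith [le_abs_self l, hZnn ω]) (abs_nonneg l)
  have hind : ∀ ω, {ω | Z ω ≤ M}.indicator (fun _ => max (l - M) 0) ω ≤ max (l - Z ω) 0 := by
    intro ω
    by_cases hω : ω ∈ {ω | Z ω ≤ M}
    · rw [Set.indicator_of_mem hω]
      exact max_le_max (sub_le_sub_left hω l) le_rfl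
    · rw [Set.indicator_of_notMem hω]
      exact le_max_right _ _
  rw [← smul_eq_mul, ← integral_indicator_const _ (measurableSet_le hZmeas measurable_const)]
  exact integral_mono_of_nonneg (.of_forall fun _ => Set.indicator_nonneg
    (fun _ _ => le_max_right _ _) _) hint (.of_forall hind)

end Integrals

theorem tendsto_rpow_neg_mul_log_mul_add {s : ℝ} (hs : 0 < s) {a : ℝ} (ha : 0 < a) (C : ℝ) :
    Tendsto (fun p : ℝ => p ^ (-s) * (log (a * p) + C)) atTop (nhds 0) := by
  have hconst : Tendsto (fun p : ℝ => p ^ (-s) * (log a + C)) atTop (nhds 0) := by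
    simpa using (tendsto_rpow_neg_atTop hs).mul_const (log a + C)
  have hlog : Tendsto (fun p : ℝ => p ^ (-s) * log p) atTop (nhds 0) := by
    refine (isLittleO_log_rpow_atTop hs).tendsto_div_nhds_zero.congr' ?_
    filter_upwards [eventually_gt_atTop 0] with p hp
    rw [rpow_neg hp.le, div_eq_inv_mul]
  refine (add_zero (0 : ℝ) ▸ hconst.add hlog).congr' ?_
  filter_upwards [eventually_gt_atTop 0] with p hp
  rw [log_mul ha.ne' hp.ne']
  ring

theorem stmt8 {Ω : Type*} [MeasurableSpace Ω] (μ : Measure Ω) [IsProbabilityMeasure μ]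
    (Z : Ω → ℝ) (hZmeas : Measurable Z) (hZpos : ∀ ω, 0 < Z ω)
    (hZint : Integrable (fun ω => 1 / Z ω) μ)
    (η : ℝ) (hη : 0 < η)
    (L : ℝ → ℝ) (hL : ∀ p : ℝ, 0 < p → 0 < L p ∧ (∫ ω, max (L p - Z ω) 0 ∂μ) = p)
    (Γ : ℝ → ℝ) (hΓ : ∀ p : ℝ, 0 < p → Γ p = ∫ ω, max (Real.log (L p / Z ω)) 0 ∂μ) :
    Tendsto (fun p : ℝ => p ^ (-(1 / η)) * Γ p) atTop (nhds 0) := by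
  obtain ⟨M, hM⟩ := (eventually_lt_measureReal_setOf_le (μ := μ) (Z := Z)
    (r := 1 / 2) (by norm_num [probReal_univ])).exists
  refine squeeze_zero' ?_ ?_ (tendsto_rpow_neg_mul_log_mul_add (one_div_pos.2 hη)
    (a := 3) three_pos (∫ ω, 1 / Z ω ∂μ))
  · filter_upwards [eventually_gt_atTop 0] with p hp
    rw [hΓ p hp]
    exact mul_nonneg (rpow_nonneg hp.le _) (integral_nonneg fun _ => le_max_right _ _)
  · filter_upwards [eventually_ge_atTop 1, eventually_ge_atTop M] with p hp1 hpM
    have hp : 0 < p := one_pos.trans_le hp1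
    obtain ⟨hl, hlp⟩ := hL p hp
    have hL3 : L p ≤ 3 * p := by
      have := measureReal_mul_max_sub_le_integral (μ := μ) hZmeas (fun ω => (hZpos ω).le) (L p) M
      rw [hlp] at this
      nlinarith [le_max_left (L p - M) 0, le_max_right (L p - M) 0,
        mul_le_mul_of_nonneg_right hM.le (le_max_right (L p - M) 0)]
    have hlog : max (log (L p)) 0 ≤ log (3 * p) :=
      max_le (log_le_log hl hL3) (log_nonneg (by linarith))
    rw [hΓ p hp]
    refine mul_le_mul_of_nonneg_left ?_ (rpow_nonneg hp.le _)
    linarith [integral_max_log_div_le hZpos hZint hl]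
end

section
/- Let c : (0,1] → ℝ be measurable with a single sign change: c ≤ 0 on (0,y'] and c ≥ 0 on [y',1] for some y' ∈ (0,1), with strict sign on sets of positive measure on each side. Let {b_l : (0,1] → [0,∞)}_{l>0} be a family of positive integrable functions such that for any 0 < l₁ < l₂ the ratio b_{l₂}(y)/b_{l₁}(y) is strictly decreasing in y. Then the equation ∫₀¹ c(y) b_l(y) dy = 0 has at most one solution l > 0. -/
/-! With `ρ = b_{l₂} / b_{l₁}` strictly decreasing and `c` changing sign from `-` to `+` at `y'`,
the integrand `(ρ y' - ρ y) c(y) b_{l₁}(y) = ρ y' · c b_{l₁} - c b_{l₂}` is nonnegative, and positive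
where `y < y'` and `c y < 0`. Hence `∫ c b_{l₂} < ρ y' ∫ c b_{l₁}`: once `∫ c b_l` vanishes it is
negative for every larger `l`, so it vanishes at most once. -/

open Real MeasureTheory

section SignChange

variable {α : Type*} [LinearOrder α] {s : Set α} {ρ c : α → ℝ} {y₀ y : α}

lemma sub_mul_nonneg_of_antitoneOn (hρ : AntitoneOn ρ s) (hy₀ : y₀ ∈ s)
    (hneg : ∀ y ∈ s, y ≤ y₀ → c y ≤ 0) (hpos : ∀ y ∈ s, y₀ ≤ y → 0 ≤ c y) (hy : y ∈ s) :
    0 ≤ (ρ y₀ - ρ y) * c y := by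
  rcases le_total y y₀ with hle | hge
  · exact mul_nonneg_of_nonpos_of_nonpos (sub_nonpos.2 (hρ hy hy₀ hle)) (hneg y hy hle)
  · exact mul_nonneg (sub_nonneg.2 (hρ hy₀ hy hge)) (hpos y hy hge)

lemma sub_mul_pos_of_strictAntiOn (hρ : StrictAntiOn ρ s) (hy₀ : y₀ ∈ s) (hy : y ∈ s)
    (hlt : y < y₀) (hc : c y < 0) : 0 < (ρ y₀ - ρ y) * c y :=
  mul_pos_of_neg_of_neg (sub_neg.2 (hρ hy hy₀ hlt)) hc

variable [MeasurableSpace α] {μ : Measure α} {b₁ b₂ : α → ℝ}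

theorem setIntegral_mul_lt_of_strictAntiOn_div (hs : MeasurableSet s) (hy₀ : y₀ ∈ s)
    (hb₁ : ∀ y ∈ s, 0 < b₁ y) (hρ : StrictAntiOn (fun y => b₂ y / b₁ y) s)
    (hneg : ∀ y ∈ s, y ≤ y₀ → c y ≤ 0) (hpos : ∀ y ∈ s, y₀ ≤ y → 0 ≤ c y)
    (hnegstrict : 0 < μ {y ∈ s | y < y₀ ∧ c y < 0})
    (hi₁ : IntegrableOn (fun y => c y * b₁ y) s μ) (hi₂ : IntegrableOn (fun y => c y * b₂ y) s μ) :
    ∫ y in s, c y * b₂ y ∂μ < b₂ y₀ / b₁ y₀ * ∫ y in s, c y * b₁ y ∂μ := by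
  set ρ : α → ℝ := fun y => b₂ y / b₁ y
  set g : α → ℝ := fun y => ρ y₀ * (c y * b₁ y) - c y * b₂ y
  have hg_eq : ∀ y ∈ s, g y = (ρ y₀ - ρ y) * c y * b₁ y := fun y hy => by
    simp only [g, ρ]
    field_simp [(hb₁ y hy).ne']
  have hg_int : IntegrableOn g s μ := (hi₁.const_mul _).sub hi₂
  have hg_nonneg : ∀ y ∈ s, 0 ≤ g y := fun y hy => by
    rw [hg_eq y hy]
    exact mul_nonneg (sub_mul_nonneg_of_antitoneOn hρ.antitoneOn hy₀ hneg hpos hy) (hb₁ y hy).le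
  have hg_pos : {y ∈ s | y < y₀ ∧ c y < 0} ⊆ Function.support g ∩ s := by
    rintro y ⟨hy, hlt, hc⟩
    refine ⟨ne_of_gt ?_, hy⟩
    rw [hg_eq y hy]
    exact mul_pos (sub_mul_pos_of_strictAntiOn hρ hy₀ hy hlt hc) (hb₁ y hy)
  have hg_integral_pos : 0 < ∫ y in s, g y ∂μ := by
    rw [setIntegral_pos_iff_support_of_nonneg_ae (ae_restrict_of_forall_mem hs hg_nonneg) hg_int]
    exact hnegstrict.trans_le (measure_mono hg_pos)
  rw [integral_sub (hi₁.const_mul _) hi₂, integral_const_mul] at hg_integral_pos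
  linarith

end SignChange

theorem stmt10_general (y' : ℝ) (hy' : y' ∈ Set.Ioo (0 : ℝ) 1)
    (c : ℝ → ℝ)
    (hneg : ∀ y ∈ Set.Ioc (0 : ℝ) y', c y ≤ 0)
    (hpos : ∀ y ∈ Set.Icc y' 1, 0 ≤ c y)
    (hnegstrict : 0 < volume {y ∈ Set.Ioc (0 : ℝ) y' | c y < 0})
    (b : ℝ → ℝ → ℝ)
    (hbpos : ∀ l : ℝ, 0 < l → ∀ y ∈ Set.Ioc (0 : ℝ) 1, 0 < b l y)
    (hbint : ∀ l : ℝ, 0 < l → IntegrableOn (fun y => c y * b l y) (Set.Ioc (0 : ℝ) 1))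
    (hratio : ∀ l₁ l₂ : ℝ, 0 < l₁ → l₁ < l₂ →
      StrictAntiOn (fun y => b l₂ y / b l₁ y) (Set.Ioc (0 : ℝ) 1)) :
    ∀ l₁ l₂ : ℝ, 0 < l₁ → 0 < l₂ →
      (∫ y in Set.Ioc (0 : ℝ) 1, c y * b l₁ y) = 0 →
      (∫ y in Set.Ioc (0 : ℝ) 1, c y * b l₂ y) = 0 → l₁ = l₂ := by
  have hy'mem : y' ∈ Set.Ioc (0 : ℝ) 1 := ⟨hy'.1, hy'.2.le⟩
  have hnegstrict' : 0 < volume {y ∈ Set.Ioc (0 : ℝ) 1 | y < y' ∧ c y < 0} := by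
    rw [← measure_sdiff_null (measure_singleton y')] at hnegstrict
    refine hnegstrict.trans_le (measure_mono ?_)
    rintro y ⟨⟨⟨hy0, hyle⟩, hc⟩, hne⟩
    have hlt : y < y' := lt_of_le_of_ne hyle hne
    exact ⟨⟨hy0, hlt.le.trans hy'.2.le⟩, hlt, hc⟩
  have hneg_of_lt : ∀ l₁ l₂ : ℝ, 0 < l₁ → l₁ < l₂ →
      (∫ y in Set.Ioc (0 : ℝ) 1, c y * b l₁ y) = 0 →
      (∫ y in Set.Ioc (0 : ℝ) 1, c y * b l₂ y) < 0 := fun l₁ l₂ hl₁ hlt h₁ => by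
    simpa [h₁] using setIntegral_mul_lt_of_strictAntiOn_div measurableSet_Ioc hy'mem
      (hbpos l₁ hl₁) (hratio l₁ l₂ hl₁ hlt) (fun y hy hle => hneg y ⟨hy.1, hle⟩)
      (fun y hy hge => hpos y ⟨hge, hy.2⟩) hnegstrict' (hbint l₁ hl₁) (hbint l₂ (hl₁.trans hlt))
  intro l₁ l₂ hl₁ hl₂ h₁ h₂
  rcases lt_trichotomy l₁ l₂ with hlt | heq | hgt
  · exact absurd h₂ (hneg_of_lt l₁ l₂ hl₁ hlt h₁).ne
  · exact heq
  · exact absurd h₁ (hneg_of_lt l₂ l₁ hl₂ hgt h₂).ne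

theorem stmt10 (y' : ℝ) (hy' : y' ∈ Set.Ioo (0 : ℝ) 1)
    (c : ℝ → ℝ) (hcmeas : Measurable c)
    (hneg : ∀ y ∈ Set.Ioc (0 : ℝ) y', c y ≤ 0)
    (hpos : ∀ y ∈ Set.Icc y' 1, 0 ≤ c y)
    (hnegstrict : 0 < volume {y ∈ Set.Ioc (0 : ℝ) y' | c y < 0})
    (hposstrict : 0 < volume {y ∈ Set.Icc y' 1 | 0 < c y})
    (b : ℝ → ℝ → ℝ)
    (hbpos : ∀ l : ℝ, 0 < l → ∀ y ∈ Set.Ioc (0 : ℝ) 1, 0 < b l y)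
    (hbint : ∀ l : ℝ, 0 < l → IntegrableOn (fun y => c y * b l y) (Set.Ioc (0 : ℝ) 1))
    (hratio : ∀ l₁ l₂ : ℝ, 0 < l₁ → l₁ < l₂ →
      StrictAntiOn (fun y => b l₂ y / b l₁ y) (Set.Ioc (0 : ℝ) 1)) :
    ∀ l₁ l₂ : ℝ, 0 < l₁ → 0 < l₂ →
      (∫ y in Set.Ioc (0 : ℝ) 1, c y * b l₁ y) = 0 →
      (∫ y in Set.Ioc (0 : ℝ) 1, c y * b l₂ y) = 0 → l₁ = l₂ :=
  stmt10_general y' hy' c hneg hpos hnegstrict b hbpos hbint hratio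
end

section
/- Let h₁ > h₂ > 0, P₁, P₂ > 0 with h₁P₁ < h₂P₂, and L, W > 0. Define P̃₁ = h₂P₂/h₁ and P̃₂ = h₁P₁/h₂ (the swapped powers). Then the transmission times are preserved, T̃ := L/(W log(1+h₁P̃₁)) + L/(W log(1+h₂P̃₂)) = L/(W log(1+h₁P₁)) + L/(W log(1+h₂P₂)), while the energy strictly decreases: L·P̃₁/(W log(1+h₁P̃₁)) + L·P̃₂/(W log(1+h₂P̃₂)) < L·P₁/(W log(1+h₁P₁)) + L·P₂/(W log(1+h₂P₂)). -/
/-!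
Swapping the powers swaps the two received SNRs `x₁ = h₁P₁ < x₂ = h₂P₂`, so the total transmission
time is unchanged. The energy of a packet sent at SNR `x` over gain `h` is `(L / (W h)) · x / log (1 + x)`;
since `x ↦ x / log (1 + x)` is strictly increasing (concavity of `log`) and `1 / h₁ < 1 / h₂`, the
rearrangement inequality shows that pairing the larger SNR with the stronger channel `h₁` costs less.
-/

open Real Set

theorem strictMonoOn_div_log_one_add : StrictMonoOn (fun x : ℝ => x / log (1 + x)) (Ioi 0) := by
  intro p (hp : 0 < p) q (hq : 0 < q) hpq
  have hslope : log (1 + q) / q < log (1 + p) / p := by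
    simpa using strictConcaveOn_log_Ioi.secant_strict_mono (a := 1) (x := 1 + p) (y := 1 + q)
      (mem_Ioi.2 one_pos) (by simp only [mem_Ioi]; linarith) (by simp only [mem_Ioi]; linarith)
      (by linarith) (by linarith) (by linarith)
  have hpos : 0 < log (1 + q) / q := div_pos (log_pos (by linarith)) hq
  simpa only [inv_div] using inv_strictAnti₀ hpos hslope

theorem mul_div_mul_eq_div_mul_mul_mul_div {K : Type*} [Field K] {h : K} (hh : h ≠ 0)
    (L P W y : K) : L * P / (W * y) = L / (W * h) * (h * P / y) := by
  rw [div_mul_div_comm, mul_left_comm L h P, mul_assoc W h y, mul_left_comm W h y,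
    mul_div_mul_left _ _ hh]

theorem stmt18_general (h₁ h₂ P₁ P₂ L W : ℝ) (hh₂ : 0 < h₂) (hh : h₂ < h₁)
    (hP₁ : 0 < P₁) (hswap : h₁ * P₁ < h₂ * P₂)
    (hL : 0 < L) (hW : 0 < W) :
    (L / (W * Real.log (1 + h₁ * (h₂ * P₂ / h₁))) +
        L / (W * Real.log (1 + h₂ * (h₁ * P₁ / h₂))) =
      L / (W * Real.log (1 + h₁ * P₁)) + L / (W * Real.log (1 + h₂ * P₂))) ∧
    (L * (h₂ * P₂ / h₁) / (W * Real.log (1 + h₁ * (h₂ * P₂ / h₁))) +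
        L * (h₁ * P₁ / h₂) / (W * Real.log (1 + h₂ * (h₁ * P₁ / h₂))) <
      L * P₁ / (W * Real.log (1 + h₁ * P₁)) +
        L * P₂ / (W * Real.log (1 + h₂ * P₂))) := by
  have hh₁ : 0 < h₁ := hh₂.trans hh
  have hsnr₁ : h₁ * (h₂ * P₂ / h₁) = h₂ * P₂ := mul_div_cancel₀ _ hh₁.ne'
  have hsnr₂ : h₂ * (h₁ * P₁ / h₂) = h₁ * P₁ := mul_div_cancel₀ _ hh₂.ne'
  have hrate : h₁ * P₁ / log (1 + h₁ * P₁) < h₂ * P₂ / log (1 + h₂ * P₂) :=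
    strictMonoOn_div_log_one_add (mul_pos hh₁ hP₁) ((mul_pos hh₁ hP₁).trans hswap) hswap
  have hweight : L / (W * h₁) < L / (W * h₂) := by gcongr
  refine ⟨by rw [hsnr₁, hsnr₂, add_comm], ?_⟩
  rw [mul_div_mul_eq_div_mul_mul_mul_div hh₁.ne', mul_div_mul_eq_div_mul_mul_mul_div hh₂.ne',
    mul_div_mul_eq_div_mul_mul_mul_div hh₁.ne', mul_div_mul_eq_div_mul_mul_mul_div hh₂.ne',
    hsnr₁, hsnr₂]
  linarith [mul_add_mul_lt_mul_add_mul hrate hweight]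

theorem stmt18 (h₁ h₂ P₁ P₂ L W : ℝ) (hh₂ : 0 < h₂) (hh : h₂ < h₁)
    (hP₁ : 0 < P₁) (hP₂ : 0 < P₂) (hswap : h₁ * P₁ < h₂ * P₂)
    (hL : 0 < L) (hW : 0 < W) :
    (L / (W * Real.log (1 + h₁ * (h₂ * P₂ / h₁))) +
        L / (W * Real.log (1 + h₂ * (h₁ * P₁ / h₂))) =
      L / (W * Real.log (1 + h₁ * P₁)) + L / (W * Real.log (1 + h₂ * P₂))) ∧
    (L * (h₂ * P₂ / h₁) / (W * Real.log (1 + h₁ * (h₂ * P₂ / h₁))) +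
        L * (h₁ * P₁ / h₂) / (W * Real.log (1 + h₂ * (h₁ * P₁ / h₂))) <
      L * P₁ / (W * Real.log (1 + h₁ * P₁)) +
        L * P₂ / (W * Real.log (1 + h₂ * P₂))) :=
  stmt18_general h₁ h₂ P₁ P₂ L W hh₂ hh hP₁ hswap hL hW
end
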